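/- arXiv:2602.12910 — 5 statements merged into one kernel-verified Lean document; each statement's English description precedes it below -/
import Mathlib

section
/- Fix a weight w ≥ 0. A seat total S ∈ {0,…,N} minimizes Φ_p(·; w) over {0,…,N} if and only if (S = 0 or Δ⁺(S−1; w) ≤ 0) and (S = N or Δ⁺(S; w) ≥ 0). In other words, the discrete first-order condition Δ⁺(S−1; w) ≤ 0 ≤ Δ⁺(S; w) (with endpoint conventions Δ⁺(−1; w) = −∞ and Δ⁺(N; w) = +∞) characterizes the global minimizers of Φ_p(·; w). -/
open Finset

/-- Sum of the `S` largest entries of the vote-share profile `p`. -/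
noncomputable def topSum {N : ℕ} (p : Fin N → ℝ) (S : ℕ) : ℝ :=
  ∑ i : Fin N, if (i : ℕ) < S then p (Tuple.sort p i.rev) else 0

/-- `ordStat p i` is the `(i+1)`-th largest entry of `p` (so `ordStat p ⟨S-1,_⟩` is `p_(S)`). -/
noncomputable def ordStat {N : ℕ} (p : Fin N → ℝ) (i : Fin N) : ℝ :=
  p (Tuple.sort p i.rev)

/-- Total misrepresentation `Φ_p(S; w) = S + a − 2·Γ_p(S) + w·|a − S|` of a top-`S`
allocation at weight `w`, where `a = ∑ d, p d`. -/
noncomputable def PhiS {N : ℕ} (p : Fin N → ℝ) (S : ℕ) (w : ℝ) : ℝ :=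
  (S : ℝ) + (∑ d, p d) - 2 * topSum p S + w * |(∑ d, p d) - (S : ℝ)|

section Aux

variable {N : ℕ} (p : Fin N → ℝ)

lemma topSum_succ (T : ℕ) (h : T < N) :
    topSum p (T + 1) = topSum p T + ordStat p ⟨T, h⟩ := by
  unfold topSum ordStat
  have key : ∀ i : Fin N, (if (i : ℕ) < T + 1 then p (Tuple.sort p i.rev) else 0)
      = (if (i : ℕ) < T then p (Tuple.sort p i.rev) else 0)
        + (if i = ⟨T, h⟩ then p (Tuple.sort p i.rev) else 0) := by
    intro i
    by_cases he : i = (⟨T, h⟩ : Fin N)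
    · subst he
      simp
    · have hne : (i : ℕ) ≠ T := fun hc => he (Fin.ext hc)
      by_cases hi : (i : ℕ) < T
      · simp [hi, Nat.lt_succ_of_lt hi, he]
      · have : ¬ (i : ℕ) < T + 1 := by omega
        simp [hi, this, he]
  rw [Finset.sum_congr rfl (fun i _ => key i), Finset.sum_add_distrib,
    Finset.sum_ite_eq' Finset.univ]
  simp

lemma topSum_succ_eq (T : ℕ) (h : N ≤ T) : topSum p (T + 1) = topSum p T := by
  unfold topSum
  apply Finset.sum_congr rfl
  intro i _
  have h1 : (i : ℕ) < T := lt_of_lt_of_le i.isLt h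
  simp [h1, Nat.lt_succ_of_lt h1]

lemma ordStat_anti (i j : Fin N) (hij : i ≤ j) : ordStat p j ≤ ordStat p i :=
  Tuple.monotone_sort p (Fin.rev_le_rev.mpr hij)

end Aux

/-- Lemma 2, discrete first-order condition.
Fix a weight `w ≥ 0`. A seat total `S ∈ {0,…,N}` minimizes `Φ_p(·; w)` over `{0,…,N}`
if and only if `(S = 0 ∨ Δ⁺(S−1; w) ≤ 0)` and `(S = N ∨ Δ⁺(S; w) ≥ 0)`, where
`Δ⁺(S; w) = Φ_p(S+1; w) − Φ_p(S; w)` (the endpoint cases encode the conventions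
`Δ⁺(−1; w) = −∞` and `Δ⁺(N; w) = +∞`). -/
theorem stmt2 (N : ℕ) (hN : 3 ≤ N) (p : Fin N → ℝ)
    (hp : ∀ d, 0 ≤ p d ∧ p d ≤ 1)
    (w : ℝ) (hw : 0 ≤ w) (S : ℕ) (hS : S ≤ N) :
    (∀ S' ≤ N, PhiS p S w ≤ PhiS p S' w) ↔
      ((S = 0 ∨ PhiS p S w - PhiS p (S - 1) w ≤ 0) ∧
       (S = N ∨ 0 ≤ PhiS p (S + 1) w - PhiS p S w)) := by
  set a : ℝ := ∑ d, p d with ha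
  -- difference of consecutive topSums is antitone and nonneg
  set d : ℕ → ℝ := fun T => topSum p (T + 1) - topSum p T with hd
  have hd_nonneg : ∀ T, 0 ≤ d T := by
    intro T
    by_cases h : T < N
    · have := topSum_succ p T h
      have h0 : 0 ≤ ordStat p ⟨T, h⟩ := (hp _).1
      simp only [hd]
      linarith
    · have := topSum_succ_eq p T (le_of_not_gt h)
      simp only [hd]
      linarith
  have hd_anti : ∀ T, d (T + 1) ≤ d T := by
    intro T
    by_cases h1 : T + 1 < N
    · have hT : T < N := Nat.lt_of_succ_lt h1
      have e1 := topSum_succ p T hT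
      have e2 := topSum_succ p (T + 1) h1
      have := ordStat_anti p ⟨T, hT⟩ ⟨T + 1, h1⟩ (by simp [Fin.le_def])
      simp only [hd]
      rw [e1, e2]
      linarith
    · by_cases h2 : T < N
      · have e1 := topSum_succ p T h2
        have e2 := topSum_succ_eq p (T + 1) (le_of_not_gt h1)
        have h0 : 0 ≤ ordStat p ⟨T, h2⟩ := (hp _).1
        simp only [hd]
        rw [e1, e2]
        linarith
      · have e1 := topSum_succ_eq p T (le_of_not_gt h2)
        have e2 := topSum_succ_eq p (T + 1) (by omega)
        simp only [hd]
        linarith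
  -- the absolute-value increment is monotone (convexity of |a - ·|)
  set δ : ℕ → ℝ := fun T => |a - ((T : ℝ) + 1)| - |a - (T : ℝ)| with hδ
  have hδ_mono : ∀ T, δ T ≤ δ (T + 1) := by
    intro T
    simp only [hδ]
    push_cast
    set x : ℝ := a - ((T : ℝ) + 1) with hx
    have hx1 : a - (T : ℝ) = x + 1 := by rw [hx]; ring
    have hx2 : a - ((T : ℝ) + 1 + 1) = x - 1 := by rw [hx]; ring
    rw [hx1, hx2]
    have h1 : |(x + 1) + (x - 1)| ≤ |x + 1| + |x - 1| := abs_add_le _ _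
    have h2 : |(x + 1) + (x - 1)| = 2 * |x| := by
      rw [show (x + 1) + (x - 1) = 2 * x by ring, abs_mul]
      norm_num
    linarith
  -- formula for the forward difference
  set Δ : ℕ → ℝ := fun T => PhiS p (T + 1) w - PhiS p T w with hΔ
  have hΔ_eq : ∀ T, Δ T = 1 - 2 * d T + w * δ T := by
    intro T
    simp only [hΔ, hd, hδ, PhiS, ← ha]
    push_cast
    ring
  have hΔ_step : ∀ T, Δ T ≤ Δ (T + 1) := by
    intro T
    rw [hΔ_eq, hΔ_eq]
    have h1 := hd_anti T
    have h2 := hδ_mono T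
    nlinarith
  have hΔ_mono : Monotone Δ := monotone_nat_of_le_succ hΔ_step
  constructor
  · intro hmin
    constructor
    · rcases Nat.eq_zero_or_pos S with h | h
      · exact Or.inl h
      · right
        have := hmin (S - 1) (by omega)
        linarith
    · rcases eq_or_lt_of_le hS with h | h
      · exact Or.inl h
      · right
        have := hmin (S + 1) (by omega)
        linarith
  · rintro ⟨h1, h2⟩ S' hS'
    rcases le_or_gt S' S with hle | hlt
    · -- going down
      rcases eq_or_lt_of_le hle with rfl | hlt'
      · exact le_refl _
      rcases h1 with rfl | h1
      · omega
      · have hS1 : 1 ≤ S := by omega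
        have hΔS1 : Δ (S - 1) ≤ 0 := by
          simp only [hΔ]
          rw [show S - 1 + 1 = S by omega]
          exact h1
        have down : ∀ m k, k + m = S → PhiS p S w ≤ PhiS p k w := by
          intro m
          induction m with
          | zero => intro k hk; rw [show k = S by omega]
          | succ m ih =>
            intro k hk
            have hk1 : Δ k ≤ Δ (S - 1) := hΔ_mono (by omega)
            have hstep : PhiS p (k + 1) w ≤ PhiS p k w := by
              have : Δ k = PhiS p (k + 1) w - PhiS p k w := rfl
              linarith
            calc PhiS p S w ≤ PhiS p (k + 1) w := ih (k + 1) (by omega)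
              _ ≤ PhiS p k w := hstep
        exact down (S - S') S' (by omega)
    · -- going up
      rcases h2 with rfl | h2
      · omega
      · have hΔS : 0 ≤ Δ S := h2
        have up : ∀ m : ℕ, PhiS p S w ≤ PhiS p (S + m) w := by
          intro m
          induction m with
          | zero => simp
          | succ m ih =>
            have : Δ S ≤ Δ (S + m) := hΔ_mono (Nat.le_add_right _ _)
            have hstep : PhiS p (S + m) w ≤ PhiS p (S + m + 1) w := by
              have h3 : Δ (S + m) = PhiS p (S + m + 1) w - PhiS p (S + m) w := rfl
              linarith
            calc PhiS p S w ≤ PhiS p (S + m) w := ih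
              _ ≤ PhiS p (S + (m + 1)) w := by
                  rw [show S + (m + 1) = S + m + 1 by ring]; exact hstep
        have := up (S' - S)
        rwa [show S + (S' - S) = S' by omega] at this
end

section
/- Let N ≥ 3 and let w > 0. Then strong monotonicity fails for every misrepresentation-minimizing rule at weight w: there exist profiles p and q with p_d ≤ q_d for every district d, and a district d₀ with p_{d₀} = q_{d₀} > 1/2, such that d₀ belongs to every allocation minimizing Φ_p(·; w) over subsets of Fin N, but d₀ belongs to no allocation minimizing Φ_q(·; w). -/
open Finset

/-- District-level misrepresentation `Dist(x) = ∑_{d ∈ x} (1 − p_d) + ∑_{d ∉ x} p_d`. -/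
noncomputable def distM {N : ℕ} (p : Fin N → ℝ) (x : Finset (Fin N)) : ℝ :=
  ∑ d ∈ x, (1 - p d) + ∑ d ∈ xᶜ, p d

/-- Statewide misrepresentation `Agg(x) = |a − |x||` where `a = ∑ d, p d`. -/
noncomputable def aggM {N : ℕ} (p : Fin N → ℝ) (x : Finset (Fin N)) : ℝ :=
  |(∑ d, p d) - (x.card : ℝ)|

/-- Total misrepresentation `Φ(x; w) = Dist(x) + w·Agg(x)` of allocation `x`. -/
noncomputable def PhiA {N : ℕ} (p : Fin N → ℝ) (x : Finset (Fin N)) (w : ℝ) : ℝ :=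
  distM p x + w * aggM p x

lemma distM_eq' {N : ℕ} (p : Fin N → ℝ) (x : Finset (Fin N)) :
    distM p x = (x.card : ℝ) + (∑ d, p d) - 2 * ∑ d ∈ x, p d := by
  have hc : ∑ d ∈ x, p d + ∑ d ∈ xᶜ, p d = ∑ d, p d := Finset.sum_add_sum_compl x p
  have h1 : ∑ d ∈ x, (1 - p d) = (x.card : ℝ) - ∑ d ∈ x, p d := by
    rw [Finset.sum_sub_distrib, Finset.sum_const, nsmul_eq_mul, mul_one]
  unfold distM
  rw [h1]; linarith

lemma PhiA_eq' {N : ℕ} (p : Fin N → ℝ) (x : Finset (Fin N)) (w : ℝ) :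
    PhiA p x w = (x.card : ℝ) + (∑ d, p d) - 2 * ∑ d ∈ x, p d
      + w * |(∑ d, p d) - (x.card : ℝ)| := by
  unfold PhiA aggM
  rw [distM_eq']

/-- Swapping a member `a` for a nonmember `b` with strictly higher share strictly
decreases `Φ`. -/
lemma swap_lt {N : ℕ} (r : Fin N → ℝ) (w : ℝ) (hw : 0 ≤ w) (x : Finset (Fin N))
    (a b : Fin N) (ha : a ∈ x) (hb : b ∉ x) (hr : r a < r b) :
    PhiA r (insert b (x.erase a)) w < PhiA r x w := by
  have hb' : b ∉ x.erase a := fun h => hb (Finset.mem_of_mem_erase h)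
  have hcard : ((insert b (x.erase a)).card : ℝ) = (x.card : ℝ) := by
    rw [Finset.card_insert_of_notMem hb', Finset.card_erase_of_mem ha]
    have : 1 ≤ x.card := Finset.card_pos.mpr ⟨a, ha⟩
    push_cast [Nat.sub_add_cancel this]
    ring
  have hsum : ∑ d ∈ insert b (x.erase a), r d = ∑ d ∈ x, r d - r a + r b := by
    rw [Finset.sum_insert hb', Finset.sum_erase_eq_sub ha]
    ring
  rw [PhiA_eq', PhiA_eq', hcard, hsum]
  linarith

/-- Removing a member `a` strictly decreases `Φ` when the allocation is oversized
(`card x − 1 ≥ a`) and `2 r a − 1 < w`. -/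
lemma erase_lt {N : ℕ} (r : Fin N → ℝ) (w : ℝ) (x : Finset (Fin N))
    (a : Fin N) (ha : a ∈ x) (hA : ∑ d, r d ≤ (x.card : ℝ) - 1)
    (h : 2 * r a - 1 < w) :
    PhiA r (x.erase a) w < PhiA r x w := by
  have h1 : 1 ≤ x.card := Finset.card_pos.mpr ⟨a, ha⟩
  have hcard : ((x.erase a).card : ℝ) = (x.card : ℝ) - 1 := by
    rw [Finset.card_erase_of_mem ha]
    push_cast [Nat.cast_sub h1]
    ring
  have hsum : ∑ d ∈ x.erase a, r d = ∑ d ∈ x, r d - r a := Finset.sum_erase_eq_sub ha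
  rw [PhiA_eq', PhiA_eq', hcard, hsum]
  rw [abs_of_nonpos (by linarith), abs_of_nonpos (by linarith)]
  linarith

/-- Proposition 4, "only if" direction: failure of strong
monotonicity for every positive weight.
Let `N ≥ 3` and `w > 0`. Then there exist profiles `p ≤ q` (componentwise) and a
district `d₀` with `p_{d₀} = q_{d₀} > 1/2` such that `d₀` belongs to every allocation
minimizing `Φ_p(·; w)`, but `d₀` belongs to no allocation minimizing `Φ_q(·; w)`. -/
theorem stmt15 (N : ℕ) (hN : 3 ≤ N) (w : ℝ) (hw : 0 < w) :
    ∃ (p q : Fin N → ℝ) (d₀ : Fin N),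
      (∀ d, 0 ≤ p d ∧ p d ≤ 1) ∧ (∀ d, 0 ≤ q d ∧ q d ≤ 1) ∧
      (∀ d, p d ≤ q d) ∧ p d₀ = q d₀ ∧ 1 / 2 < p d₀ ∧
      (∀ x : Finset (Fin N), (∀ y : Finset (Fin N), PhiA p x w ≤ PhiA p y w) → d₀ ∈ x) ∧
      (∀ x : Finset (Fin N), (∀ y : Finset (Fin N), PhiA q x w ≤ PhiA q y w) → d₀ ∉ x) := by
  obtain ⟨t, v, hthalf, ht1, htv, hv1, h2tw, htv2⟩ :
      ∃ t v : ℝ, 1 / 2 < t ∧ t ≤ 1 ∧ t < v ∧ v ≤ 1 ∧ 2 * t - 1 < w ∧ t + v + v ≤ 2 := by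
    refine ⟨1 / 2 + min w 1 / 16, 7 / 10, ?_, ?_, ?_, ?_, ?_, ?_⟩ <;>
      [skip; skip; skip; norm_num; skip; skip] <;>
      · have h1 : 0 < min w 1 := lt_min hw one_pos
        have h2 : min w 1 ≤ 1 := min_le_right _ _
        have h3 : min w 1 ≤ w := min_le_left _ _
        linarith
  have ht0 : 0 < t := by linarith
  have hv0 : 0 < v := by linarith
  let d₀ : Fin N := ⟨0, by omega⟩
  let d₁ : Fin N := ⟨1, by omega⟩
  let d₂ : Fin N := ⟨2, by omega⟩
  have h01 : d₀ ≠ d₁ := by simp [d₀, d₁, Fin.ext_iff]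
  have h02 : d₀ ≠ d₂ := by simp [d₀, d₂, Fin.ext_iff]
  have h12 : d₁ ≠ d₂ := by simp [d₁, d₂, Fin.ext_iff]
  set p : Fin N → ℝ := fun d => if d = d₀ then t else 0 with hpdef
  set q : Fin N → ℝ := fun d =>
    (if d = d₀ then t else 0) + (if d = d₁ then v else 0) + (if d = d₂ then v else 0)
    with hqdef
  have hpd₀ : p d₀ = t := by simp [hpdef]
  have hqd₀ : q d₀ = t := by simp [hqdef, h01, h02]
  have hqd₁ : q d₁ = v := by simp [hqdef, Ne.symm h01, h12]
  have hqd₂ : q d₂ = v := by simp [hqdef, Ne.symm h02, Ne.symm h12]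
  have hsp : ∑ d, p d = t := by simp [hpdef]
  have hsq : ∑ d, q d = t + v + v := by
    rw [hqdef]
    rw [Finset.sum_add_distrib, Finset.sum_add_distrib]
    simp
  refine ⟨p, q, d₀, ?_, ?_, ?_, by rw [hpd₀, hqd₀], by rw [hpd₀]; exact hthalf, ?_, ?_⟩
  · intro d; rw [hpdef]; dsimp only
    split <;> constructor <;> linarith
  · intro d; rw [hqdef]; dsimp only
    rcases eq_or_ne d d₀ with h0 | h0 <;>
      rcases eq_or_ne d d₁ with h1 | h1 <;>
      rcases eq_or_ne d d₂ with h2 | h2 <;>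
      simp_all <;> first | linarith | (constructor <;> linarith)
  · intro d; rw [hpdef, hqdef]; dsimp only
    rcases eq_or_ne d d₀ with h0 | h0 <;>
      rcases eq_or_ne d d₁ with h1 | h1 <;>
      rcases eq_or_ne d d₂ with h2 | h2 <;>
      simp_all <;> linarith
  · -- under p, every minimizer contains d₀
    intro x hx
    by_contra hd
    rcases x.eq_empty_or_nonempty with rfl | ⟨d, hdx⟩
    · have h := hx {d₀}
      rw [PhiA_eq', PhiA_eq', hsp] at h
      simp only [Finset.card_empty, Finset.card_singleton, Finset.sum_empty,
        Finset.sum_singleton, hpd₀] at h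
      rw [show ((0:ℕ):ℝ) = 0 by norm_num, show ((1:ℕ):ℝ) = 1 by norm_num] at h
      rw [sub_zero, abs_of_pos ht0, abs_of_nonpos (by linarith)] at h
      nlinarith [mul_pos hw (by linarith : (0:ℝ) < 2 * t - 1)]
    · have hdd : d ≠ d₀ := by rintro rfl; exact hd hdx
      have hdne : p d < p d₀ := by
        rw [hpd₀, hpdef]; dsimp only
        rw [if_neg hdd]
        exact ht0
      have := swap_lt p w (le_of_lt hw) x d d₀ hdx hd hdne
      exact absurd (hx _) (not_le.mpr this)
  · -- under q, no minimizer contains d₀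
    intro x hx hd
    by_cases h1 : d₁ ∈ x
    · by_cases h2 : d₂ ∈ x
      · -- remove d₀
        have hsub : ({d₀, d₁, d₂} : Finset (Fin N)) ⊆ x := by
          intro a ha
          simp only [Finset.mem_insert, Finset.mem_singleton] at ha
          rcases ha with rfl | rfl | rfl <;> assumption
        have hcard3 : 3 ≤ x.card := by
          have : ({d₀, d₁, d₂} : Finset (Fin N)).card = 3 := by
            rw [Finset.card_insert_of_notMem (by simp [h01, h02]),
              Finset.card_insert_of_notMem (by simp [h12]),
              Finset.card_singleton]
          calc 3 = ({d₀, d₁, d₂} : Finset (Fin N)).card := this.symm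
            _ ≤ x.card := Finset.card_le_card hsub
        have hA : ∑ d, q d ≤ (x.card : ℝ) - 1 := by
          rw [hsq]
          have : (3:ℝ) ≤ (x.card : ℝ) := by exact_mod_cast hcard3
          linarith
        have := erase_lt q w x d₀ hd hA (by rw [hqd₀]; linarith)
        exact absurd (hx _) (not_le.mpr this)
      · have := swap_lt q w (le_of_lt hw) x d₀ d₂ hd h2 (by rw [hqd₀, hqd₂]; exact htv)
        exact absurd (hx _) (not_le.mpr this)
    · have := swap_lt q w (le_of_lt hw) x d₀ d₁ hd h1 (by rw [hqd₀, hqd₁]; exact htv)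
      exact absurd (hx _) (not_le.mpr this)
end

section
/- Let N ≥ 3 and let w ≥ 0 be any finite weight. Then the misrepresentation-minimizing rule at weight w is not gerrymandering-proof: there exist profiles p and q with ∑_d p_d = ∑_d q_d such that every seat total minimizing Φ_p(·; w) over {0,…,N} equals N−1 while every seat total minimizing Φ_q(·; w) over {0,…,N} equals N−2. -/
open Finset

/-! For an antitone profile `p` with aggregate `a`,
`Φ_p(S + 1) - Φ_p(S) = (1 - 2 p_S) + w (|a - (S + 1)| - |a - S|)`.
If exactly the first `k` entries exceed `1/2` and `|a - k| ≤ 1/2`, then for `S < k` the first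
term is negative and the second nonpositive, and for `S ≥ k` the reverse, so `k` is the unique
minimiser at every weight `w ≥ 0`. The aggregate `N - 3/2` lies within `1/2` of both `N - 1` and
`N - 2`: it is realised by `N - 1` districts at share `(N - 3/2)/(N - 1) > 1/2` plus an empty one,
and by `N - 2` unanimous districts plus two at `1/4`. -/

theorem apply_lt_of_succ_lt_of_lt_succ {β : Type*} [Preorder β] {f : ℕ → β} {k N : ℕ}
    (hdec : ∀ S < k, f (S + 1) < f S) (hinc : ∀ S, k ≤ S → S < N → f S < f (S + 1))
    {S : ℕ} (hS : S ≤ N) (hSk : S ≠ k) : f k < f S := by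
  rcases hSk.lt_or_gt with hlt | hgt
  · refine strictAntiOn_Iic_of_succ_lt (fun m hm => ?_) (Set.mem_Iic.2 hlt.le)
      (Set.mem_Iic.2 le_rfl) hlt
    simpa [Order.succ_eq_add_one] using hdec m hm
  · refine strictMonoOn_of_lt_succ Set.ordConnected_Icc (fun m _ hm hm' => ?_)
      ⟨le_rfl, hgt.le.trans hS⟩ ⟨hgt.le, hS⟩ hgt
    rw [Order.succ_eq_add_one] at hm' ⊢
    exact hinc m hm.1 (by have := hm'.2; omega)

lemma abs_sub_add_one_le_abs_sub {a x : ℝ} (h : x + 1 / 2 ≤ a) : |a - (x + 1)| ≤ |a - x| := by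
  rw [abs_of_nonneg (by linarith : 0 ≤ a - x), abs_le]
  constructor <;> linarith

lemma abs_sub_le_abs_sub_add_one {a x : ℝ} (h : a ≤ x + 1 / 2) : |a - x| ≤ |a - (x + 1)| := by
  rw [abs_of_nonpos (by linarith : a - (x + 1) ≤ 0), abs_le]
  constructor <;> linarith

section Antitone

variable {N : ℕ} {p : Fin N → ℝ}

lemma topSum_of_antitone (hp : Antitone p) (S : ℕ) :
    topSum p S = ∑ i : Fin N, if (i : ℕ) < S then p i else 0 := by
  have hsort : p ∘ Fin.revPerm = p ∘ Tuple.sort p :=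
    Tuple.comp_sort_eq_comp_iff_monotone.mpr fun i j hij => hp (Fin.rev_le_rev.mpr hij)
  refine sum_congr rfl fun i _ => ?_
  rw [show p (Tuple.sort p i.rev) = p i by simpa using (congrFun hsort i.rev).symm]

lemma topSum_succ_of_antitone (hp : Antitone p) {S : ℕ} (hS : S < N) :
    topSum p (S + 1) = topSum p S + p ⟨S, hS⟩ := by
  rw [topSum_of_antitone hp, topSum_of_antitone hp, ← Fintype.sum_ite_eq' ⟨S, hS⟩ p,
    ← sum_add_distrib]
  refine sum_congr rfl fun i _ => ?_
  by_cases hi : (i : ℕ) = S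
  · simp [hi, Fin.ext_iff]
  · have : (i : ℕ) < S + 1 ↔ (i : ℕ) < S := by omega
    simp [this, hi, Fin.ext_iff]

lemma PhiS_succ_of_antitone (hp : Antitone p) {S : ℕ} (hS : S < N) (w : ℝ) :
    PhiS p (S + 1) w = PhiS p S w + (1 - 2 * p ⟨S, hS⟩)
      + w * (|(∑ d, p d) - (S + 1)| - |(∑ d, p d) - S|) := by
  unfold PhiS
  rw [topSum_succ_of_antitone hp hS]
  push_cast
  ring

theorem PhiS_unique_argmin_of_antitone (hp : Antitone p) {k : ℕ} (hk : k ≤ N)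
    (hhi : ∀ i : Fin N, (i : ℕ) < k → 1 / 2 < p i)
    (hlo : ∀ i : Fin N, k ≤ i → p i < 1 / 2)
    (ha : |(∑ d, p d) - k| ≤ 1 / 2) {w : ℝ} (hw : 0 ≤ w) :
    (∀ S ≤ N, PhiS p k w ≤ PhiS p S w) ∧
      (∀ S ≤ N, (∀ S' ≤ N, PhiS p S w ≤ PhiS p S' w) → S = k) := by
  obtain ⟨ha₁, ha₂⟩ := abs_le.mp ha
  have hlt : ∀ S ≤ N, S ≠ k → PhiS p k w < PhiS p S w := by
    refine fun S => apply_lt_of_succ_lt_of_lt_succ (f := fun S => PhiS p S w)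
      (fun S hS => ?_) (fun S hkS hS => ?_)
    · have hSk : (S : ℝ) + 1 ≤ k := by exact_mod_cast hS
      have hpen := abs_sub_add_one_le_abs_sub (a := ∑ d, p d) (x := S) (by linarith)
      rw [PhiS_succ_of_antitone hp (hS.trans_le hk)]
      linarith [hhi ⟨S, hS.trans_le hk⟩ hS,
        mul_nonpos_of_nonneg_of_nonpos hw (sub_nonpos.2 hpen)]
    · have hkS' : (k : ℝ) ≤ S := by exact_mod_cast hkS
      have hpen := abs_sub_le_abs_sub_add_one (a := ∑ d, p d) (x := S) (by linarith)
      rw [PhiS_succ_of_antitone hp hS]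
      linarith [hlo ⟨S, hS⟩ hkS, mul_nonneg hw (sub_nonneg.2 hpen)]
  refine ⟨fun S hS => ?_, fun S hS hmin => ?_⟩
  · rcases eq_or_ne S k with rfl | hSk
    · exact le_rfl
    · exact (hlt S hS hSk).le
  · by_contra hSk
    exact (hmin k hk).not_gt (hlt S hS hSk)

end Antitone

def stepProfile (N m : ℕ) (high low : ℝ) : Fin N → ℝ :=
  fun d => if (d : ℕ) < m then high else low

section StepProfile

variable {N m : ℕ} {high low : ℝ}

lemma stepProfile_mem_Icc (hhi : high ∈ Set.Icc 0 1) (hlo : low ∈ Set.Icc 0 1) (d : Fin N) :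
    stepProfile N m high low d ∈ Set.Icc 0 1 := by
  unfold stepProfile
  split_ifs
  exacts [hhi, hlo]

lemma antitone_stepProfile (h : low ≤ high) : Antitone (stepProfile N m high low) := by
  intro i j hij
  unfold stepProfile
  split_ifs <;> first | exact le_rfl | exact h | omega

lemma sum_stepProfile (hm : m ≤ N) :
    ∑ d, stepProfile N m high low d = m * high + (N - m) * low := by
  calc ∑ d, stepProfile N m high low d
      = ∑ d : Fin N, (low + if (d : ℕ) < m then high - low else 0) := by
        refine sum_congr rfl fun d _ => ?_
        unfold stepProfile
        split_ifs <;> ring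
    _ = m * high + (N - m) * low := by
        rw [sum_add_distrib, ← sum_filter, sum_const, sum_const, Fin.card_filter_val_lt,
          min_eq_right hm, card_univ, Fintype.card_fin, nsmul_eq_mul, nsmul_eq_mul]
        ring

theorem PhiS_stepProfile_unique_argmin (hm : m ≤ N) (hhi : 1 / 2 < high) (hlo : low < 1 / 2)
    (ha : |(∑ d, stepProfile N m high low d) - m| ≤ 1 / 2) {w : ℝ} (hw : 0 ≤ w) :
    (∀ S ≤ N, PhiS (stepProfile N m high low) m w ≤ PhiS (stepProfile N m high low) S w) ∧
      (∀ S ≤ N, (∀ S' ≤ N,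
        PhiS (stepProfile N m high low) S w ≤ PhiS (stepProfile N m high low) S' w) → S = m) :=
  PhiS_unique_argmin_of_antitone (antitone_stepProfile (by linarith)) hm
    (fun i hik => by simpa [stepProfile, hik] using hhi)
    (fun i hki => by simpa [stepProfile, not_lt.2 hki] using hlo) ha hw

end StepProfile

/-- Proposition 5, "only if" direction: no finite-weight rule is
gerrymandering-proof.
Let `N ≥ 3` and let `w ≥ 0` be any finite weight. Then there exist profiles `p` and `q`
with the same aggregate vote such that every seat total minimizing `Φ_p(·; w)` over
`{0,…,N}` equals `N−1`, while every seat total minimizing `Φ_q(·; w)` equals `N−2`. -/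
theorem stmt16 (N : ℕ) (hN : 3 ≤ N) (w : ℝ) (hw : 0 ≤ w) :
    ∃ p q : Fin N → ℝ,
      (∀ d, 0 ≤ p d ∧ p d ≤ 1) ∧ (∀ d, 0 ≤ q d ∧ q d ≤ 1) ∧
      (∑ d, p d) = (∑ d, q d) ∧
      (∀ S ≤ N, PhiS p (N - 1) w ≤ PhiS p S w) ∧
      (∀ S ≤ N, (∀ S' ≤ N, PhiS p S w ≤ PhiS p S' w) → S = N - 1) ∧
      (∀ S ≤ N, PhiS q (N - 2) w ≤ PhiS q S w) ∧
      (∀ S ≤ N, (∀ S' ≤ N, PhiS q S w ≤ PhiS q S' w) → S = N - 2) := by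
  have hN' : (3 : ℝ) ≤ N := by exact_mod_cast hN
  have hN1 : ((N - 1 : ℕ) : ℝ) = N - 1 := by rw [Nat.cast_sub (by omega), Nat.cast_one]
  have hN2 : ((N - 2 : ℕ) : ℝ) = N - 2 := by rw [Nat.cast_sub (by omega), Nat.cast_ofNat]
  set c : ℝ := (N - 3 / 2) / (N - 1)
  have hc_half : 1 / 2 < c := by rw [lt_div_iff₀ (by linarith)]; linarith
  have hc_le : c ≤ 1 := by rw [div_le_one₀ (by linarith)]; linarith
  have hp_sum : ∑ d, stepProfile N (N - 1) c 0 d = N - 3 / 2 := by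
    rw [sum_stepProfile (by omega), hN1, mul_div_cancel₀ _ (by linarith)]
    ring
  have hq_sum : ∑ d, stepProfile N (N - 2) 1 (1 / 4) d = N - 3 / 2 := by
    rw [sum_stepProfile (by omega), hN2]
    ring
  obtain ⟨hp_min, hp_unique⟩ := PhiS_stepProfile_unique_argmin (N := N) (m := N - 1) (low := 0)
    (by omega) hc_half (by norm_num) (by rw [hp_sum, hN1, abs_le]; constructor <;> linarith) hw
  obtain ⟨hq_min, hq_unique⟩ := PhiS_stepProfile_unique_argmin (N := N) (m := N - 2) (high := 1)
    (low := 1 / 4) (by omega) (by norm_num) (by norm_num)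
    (by rw [hq_sum, hN2, abs_le]; constructor <;> linarith) hw
  exact ⟨_, _, stepProfile_mem_Icc ⟨by linarith, hc_le⟩ ⟨le_rfl, zero_le_one⟩,
    stepProfile_mem_Icc ⟨zero_le_one, le_rfl⟩ ⟨by norm_num, by norm_num⟩,
    hp_sum.trans hq_sum.symm,
    hp_min, hp_unique, hq_min, hq_unique⟩
end

section
/- Fix N ≥ 3, m ∈ [0,1], a baseline profile p ∈ P(m), a weight w_A ≥ 0 with S_{w_A}(p) > a := N·m, and an integer k with S_{w_A}(p) < k ≤ N. Let c : P(m) × P(m) → [0,∞) be continuous with c(r, r) = 0 for all r, and such that for all distinct r, r' ∈ P(m) and all 0 ≤ θ < θ' ≤ 1, c(r, (1−θ)r + θr') < c(r, (1−θ')r + θ'r'). Define the gerrymandering cost C(w) := inf { c(p, r) : r ∈ P(m) and S_w(r) ≥ k }, with inf ∅ = ∞. Then C is strictly increasing on { w ≥ w_A : C(w) < ∞ }: for all w_A ≤ w < w' with C(w') < ∞, C(w) < C(w'). -/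
open Finset

/-- `Pset N m` is the set of profiles with statewide vote share `m`:
entries in `[0,1]` and `(1/N)·∑_d r_d = m`. -/
def Pset (N : ℕ) (m : ℝ) : Set (Fin N → ℝ) :=
  {r | (∀ d, 0 ≤ r d ∧ r d ≤ 1) ∧ (1 / (N : ℝ)) * ∑ d, r d = m}

/-- `seatTotal N w r` is the largest minimizer of `Φ_r(·; w)` over `{0,…,N}`
(ties broken in favor of party A). -/
noncomputable def seatTotal (N : ℕ) (w : ℝ) (r : Fin N → ℝ) : ℕ :=
  sSup {S | S ≤ N ∧ ∀ S' ≤ N, PhiS r S w ≤ PhiS r S' w}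

lemma ordStat_antitone {N : ℕ} (r : Fin N → ℝ) : Antitone (ordStat r) := by
  intro i j hij
  exact Tuple.monotone_sort r (Fin.rev_le_rev.mpr hij)

lemma topSum_succ_s17 {N : ℕ} (r : Fin N → ℝ) (S : ℕ) (hS : S < N) :
    topSum r (S + 1) = topSum r S + ordStat r ⟨S, hS⟩ := by
  unfold topSum ordStat
  have key : r ((Tuple.sort r) (⟨S, hS⟩ : Fin N).rev)
      = ∑ i : Fin N, if i = ⟨S, hS⟩ then r ((Tuple.sort r) i.rev) else 0 := by
    rw [Finset.sum_ite_eq' Finset.univ (⟨S, hS⟩ : Fin N) (fun i => r ((Tuple.sort r) i.rev))]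
    simp
  rw [key, ← Finset.sum_add_distrib]
  apply Finset.sum_congr rfl
  intro i _
  by_cases h : (i : ℕ) < S
  · have h1 : (i : ℕ) < S + 1 := by omega
    have hne : i ≠ ⟨S, hS⟩ := Fin.ne_of_val_ne (show (i : ℕ) ≠ S by omega)
    simp [h, h1, hne]
  · by_cases h2 : (i : ℕ) = S
    · have he : i = ⟨S, hS⟩ := Fin.ext h2
      have h1 : (i : ℕ) < S + 1 := by omega
      simp [h, h1, he]
    · have h1 : ¬ (i : ℕ) < S + 1 := by omega
      have hne : i ≠ ⟨S, hS⟩ := Fin.ne_of_val_ne (show (i : ℕ) ≠ S by omega)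
      simp [h, h1, hne]

lemma abs_step_mono (a : ℝ) : Monotone (fun S : ℕ => |a - (S + 1 : ℕ)| - |a - (S : ℕ)|) := by
  apply monotone_nat_of_le_succ
  intro S
  have h := abs_add_le (a - S) (a - (S + 2 : ℕ))
  have h2 : 2 * |a - ((S : ℝ) + 1)| ≤ |a - (S : ℕ)| + |a - (S + 2 : ℕ)| := by
    have e : (2:ℝ) * |a - ((S:ℝ) + 1)| = |(a - (S:ℕ)) + (a - ((S:ℕ) + 2 : ℕ))| := by
      rw [← abs_two, ← abs_mul]
      congr 1
      push_cast; ring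
    rw [e]
    push_cast
    push_cast at h
    exact h
  push_cast at h2 ⊢
  ring_nf at h2 ⊢
  linarith

lemma phi_step {N : ℕ} (r : Fin N → ℝ) (w : ℝ) (S : ℕ) (hS : S < N) :
    PhiS r (S + 1) w - PhiS r S w
      = 1 - 2 * ordStat r ⟨S, hS⟩
        + w * (|(∑ d, r d) - ((S + 1 : ℕ) : ℝ)| - |(∑ d, r d) - ((S : ℕ) : ℝ)|) := by
  unfold PhiS
  rw [topSum_succ_s17 r S hS]
  push_cast
  ring

lemma phi_step_mono {N : ℕ} (r : Fin N → ℝ) (w : ℝ) (hw : 0 ≤ w) {S T : ℕ}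
    (hST : S ≤ T) (hT : T < N) :
    PhiS r (S + 1) w - PhiS r S w ≤ PhiS r (T + 1) w - PhiS r T w := by
  have hS : S < N := lt_of_le_of_lt hST hT
  rw [phi_step r w S hS, phi_step r w T hT]
  have h1 : ordStat r ⟨T, hT⟩ ≤ ordStat r ⟨S, hS⟩ :=
    ordStat_antitone r (show (⟨S, hS⟩ : Fin N) ≤ ⟨T, hT⟩ from hST)
  have h2 := mul_le_mul_of_nonneg_left (abs_step_mono (∑ d, r d) hST) hw
  simp only at h2
  linarith

lemma seatTotal_ge_iff {N : ℕ} (r : Fin N → ℝ) (w : ℝ) (hw : 0 ≤ w) (k : ℕ)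
    (hk1 : 1 ≤ k) (hk2 : k ≤ N) :
    k ≤ seatTotal N w r ↔ PhiS r k w ≤ PhiS r (k - 1) w := by
  obtain ⟨K, rfl⟩ : ∃ K, k = K + 1 := ⟨k - 1, by omega⟩
  simp only [Nat.add_sub_cancel]
  have hK : K < N := by omega
  set A : Set ℕ := {S | S ≤ N ∧ ∀ S' ≤ N, PhiS r S w ≤ PhiS r S' w} with hA
  have hne : A.Nonempty := by
    obtain ⟨S, hSmem, hSmin⟩ := Finset.exists_min_image (Finset.range (N + 1))
      (fun S => PhiS r S w) ⟨0, by simp⟩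
    exact ⟨S, by simpa using Nat.lt_succ_iff.mp (Finset.mem_range.mp hSmem),
      fun S' hS' => hSmin S' (Finset.mem_range.mpr (by omega))⟩
  have hbdd : BddAbove A := ⟨N, fun x hx => hx.1⟩
  have hmem : seatTotal N w r ∈ A := Nat.sSup_mem hne hbdd
  constructor
  · intro hle
    by_contra hgt
    push_neg at hgt
    -- Phi (K) < Phi (K+1): show every S ≥ K+1 has Phi K < Phi S
    have up : ∀ S, K + 1 ≤ S → S ≤ N → PhiS r K w < PhiS r S w := by
      intro S hS1
      induction S, hS1 using Nat.le_induction with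
      | base => exact fun _ => hgt
      | succ m hm ih =>
        intro hS2
        have hmN : m < N := by omega
        have := phi_step_mono r w hw (show K ≤ m by omega) hmN
        have hKm : PhiS r K w < PhiS r m w ∨ K = m := by
          rcases Nat.lt_or_ge K m with h | h
          · exact Or.inl (ih (by omega))
          · exact Or.inr (by omega)
        rcases hKm with h | h
        · nlinarith [hgt]
        · subst h; linarith
    have hS := hmem
    have hSk : K + 1 ≤ seatTotal N w r := hle
    have := up (seatTotal N w r) hSk hS.1
    have := hS.2 K (by omega)
    linarith
  · intro hd
    by_contra hlt
    push_neg at hlt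
    have hM : seatTotal N w r ≤ K := by omega
    -- Phi is nonincreasing up to K+1
    have down : ∀ j ≤ K, PhiS r (j + 1) w ≤ PhiS r j w := by
      intro j hj
      have := phi_step_mono r w hw hj hK
      linarith
    have chain : ∀ j, j ≤ K + 1 → seatTotal N w r ≤ j → PhiS r j w ≤ PhiS r (seatTotal N w r) w := by
      intro j
      induction j with
      | zero => intro _ h; interval_cases (seatTotal N w r); exact le_refl _
      | succ j ih =>
        intro hj1 hj2
        rcases Nat.lt_or_ge (seatTotal N w r) (j + 1) with h | h
        · have := ih (by omega) (by omega)
          have := down j (by omega)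
          linarith
        · have : seatTotal N w r = j + 1 := by omega
          rw [this]
    have hin : K + 1 ∈ A := by
      refine ⟨hk2, fun S' hS' => ?_⟩
      have h1 : PhiS r (K + 1) w ≤ PhiS r (seatTotal N w r) w := chain (K + 1) le_rfl (by omega)
      exact h1.trans (hmem.2 S' hS')
    have h2 := le_csSup hbdd hin
    have hst : seatTotal N w r = sSup A := rfl
    omega

lemma phi_step_eq {N : ℕ} (r : Fin N → ℝ) (w : ℝ) (k : ℕ) (hk1 : 1 ≤ k) (hk2 : k ≤ N)
    (ha : (∑ d, r d) ≤ (k : ℝ) - 1) :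
    PhiS r k w - PhiS r (k - 1) w = 1 + w - 2 * ordStat r ⟨k - 1, by omega⟩ := by
  obtain ⟨K, rfl⟩ : ∃ K, k = K + 1 := ⟨k - 1, by omega⟩
  simp only [Nat.add_sub_cancel]
  have hK : K < N := by omega
  rw [phi_step r w K hK]
  have haK : (∑ d, r d) ≤ (K : ℝ) := by push_cast at ha ⊢; linarith
  rw [abs_of_nonpos (by push_cast; linarith), abs_of_nonpos (by push_cast; linarith)]
  push_cast
  ring

lemma ordStat_ge_iff {N : ℕ} (r : Fin N → ℝ) (k : ℕ) (hk1 : 1 ≤ k) (hk2 : k ≤ N) (b : ℝ) :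
    b ≤ ordStat r ⟨k - 1, by omega⟩ ↔
      ∃ s : Finset (Fin N), k ≤ s.card ∧ ∀ d ∈ s, b ≤ r d := by
  have hinj : Function.Injective (fun i : Fin N => Tuple.sort r i.rev) := by
    intro i j h
    exact Fin.rev_injective ((Tuple.sort r).injective h)
  constructor
  · intro h
    refine ⟨Finset.image (fun i : Fin N => Tuple.sort r i.rev)
      ((Finset.range k).attachFin (fun m hm => lt_of_lt_of_le (Finset.mem_range.mp hm) hk2)),
      ?_, ?_⟩
    · rw [Finset.card_image_of_injective _ hinj, Finset.card_attachFin, Finset.card_range]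
    · intro d hd
      obtain ⟨i, hi, rfl⟩ := Finset.mem_image.mp hd
      have hik : (i : ℕ) < k := Finset.mem_range.mp ((Finset.mem_attachFin _).mp hi)
      have : ordStat r ⟨k - 1, by omega⟩ ≤ ordStat r i :=
        ordStat_antitone r (show i ≤ (⟨k - 1, by omega⟩ : Fin N) from by
          simp only [Fin.le_def]; omega)
      exact h.trans this
  · rintro ⟨s, hcard, hs⟩
    by_contra h
    push_neg at h
    have hsub : s ⊆ Finset.image (fun i : Fin N => Tuple.sort r i.rev)
        ((Finset.range (k - 1)).attachFin
          (fun m hm => lt_of_lt_of_le (Finset.mem_range.mp hm) (by omega))) := by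
      intro d hd
      set j : Fin N := ((Tuple.sort r).symm d).rev with hj
      have hdj : Tuple.sort r j.rev = d := by
        rw [hj, Fin.rev_rev, Equiv.apply_symm_apply]
      have hrd : b ≤ ordStat r j := by
        unfold ordStat; rw [hdj]; exact hs d hd
      have hjk : (j : ℕ) < k - 1 := by
        by_contra hjk
        push_neg at hjk
        have : ordStat r j ≤ ordStat r ⟨k - 1, by omega⟩ :=
          ordStat_antitone r (show (⟨k - 1, by omega⟩ : Fin N) ≤ j from by
            simp only [Fin.le_def]; omega)
        linarith
      exact Finset.mem_image.mpr ⟨j, (Finset.mem_attachFin _).mpr (Finset.mem_range.mpr hjk), hdj⟩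
    have := Finset.card_le_card hsub
    rw [Finset.card_image_of_injective _ hinj, Finset.card_attachFin, Finset.card_range] at this
    omega

/-- Feasibility characterization. -/
lemma feas_iff {N : ℕ} (r : Fin N → ℝ) (w : ℝ) (hw : 0 ≤ w) (k : ℕ)
    (hk1 : 1 ≤ k) (hk2 : k ≤ N) (ha : (∑ d, r d) ≤ (k : ℝ) - 1) :
    k ≤ seatTotal N w r ↔
      ∃ s : Finset (Fin N), k ≤ s.card ∧ ∀ d ∈ s, (1 + w) / 2 ≤ r d := by
  rw [seatTotal_ge_iff r w hw k hk1 hk2, ← ordStat_ge_iff r k hk1 hk2]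
  have := phi_step_eq r w k hk1 hk2 ha
  constructor <;> intro h <;> linarith

lemma pset_sum {N : ℕ} (hN : 0 < N) {m : ℝ} {r : Fin N → ℝ} (hr : r ∈ Pset N m) :
    ∑ d, r d = (N : ℝ) * m := by
  have h := hr.2
  have hN' : (N : ℝ) ≠ 0 := Nat.cast_ne_zero.mpr hN.ne'
  field_simp at h
  linarith

lemma pset_isCompact (N : ℕ) (m : ℝ) : IsCompact (Pset N m) := by
  apply Metric.isCompact_of_isClosed_isBounded
  · have h1 : IsClosed {r : Fin N → ℝ | ∀ d, 0 ≤ r d ∧ r d ≤ 1} := by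
      have : {r : Fin N → ℝ | ∀ d, 0 ≤ r d ∧ r d ≤ 1}
          = ⋂ d, {r : Fin N → ℝ | 0 ≤ r d ∧ r d ≤ 1} := by
        ext r; simp [Set.mem_iInter]
      rw [this]
      exact isClosed_iInter fun d =>
        (isClosed_le continuous_const (continuous_apply d)).inter
          (isClosed_le (continuous_apply d) continuous_const)
    have h2 : IsClosed {r : Fin N → ℝ | (1 / (N : ℝ)) * ∑ d, r d = m} :=
      isClosed_eq (continuous_const.mul
        (continuous_finset_sum _ fun d _ => continuous_apply d)) continuous_const
    exact h1.inter h2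
  · apply Bornology.IsBounded.subset (Metric.isBounded_closedBall (x := (0 : Fin N → ℝ)) (r := 1))
    intro r hr
    rw [Metric.mem_closedBall, dist_pi_le_iff zero_le_one]
    intro d
    rw [Real.dist_eq]
    have := hr.1 d
    simp only [Pi.zero_apply, sub_zero]
    rw [abs_le]
    constructor <;> linarith [this.1, this.2]

lemma feasSet_isClosed (N : ℕ) (k : ℕ) (b : ℝ) :
    IsClosed (⋃ (s : Finset (Fin N)) (_ : k ≤ s.card),
      {r : Fin N → ℝ | ∀ d ∈ s, b ≤ r d}) := by
  apply Set.Finite.isClosed_biUnion (Set.toFinite _)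
  intro s _
  have : {r : Fin N → ℝ | ∀ d ∈ s, b ≤ r d} = ⋂ d ∈ s, {r : Fin N → ℝ | b ≤ r d} := by
    ext r; simp
  rw [this]
  exact isClosed_biInter fun d _ => isClosed_le continuous_const (continuous_apply d)

/-- Proposition 6: the gerrymandering cost is strictly increasing in
the statewide weight.
Fix `N ≥ 3`, `m ∈ [0,1]`, a baseline profile `p ∈ P(m)`, a weight `w_A ≥ 0` with
`S_{w_A}(p) > a = N·m`, and an integer `k` with `S_{w_A}(p) < k ≤ N`. Let `c` be a
continuous cost on `P(m) × P(m)` with `c(r,r) = 0`, nonnegative, and strictly increasing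
along segments. Writing `C(w) = inf{c(p,r) : r ∈ P(m), S_w(r) ≥ k}` (with `inf ∅ = ∞`),
for all `w_A ≤ w < w'` with `C(w') < ∞` (i.e. the feasible set at `w'` is nonempty), the
feasible set at `w` is nonempty and `C(w) < C(w')`. -/
theorem stmt17 (N : ℕ) (hN : 3 ≤ N) (m : ℝ) (hm0 : 0 ≤ m) (hm1 : m ≤ 1)
    (p : Fin N → ℝ) (hp : p ∈ Pset N m)
    (wA : ℝ) (hwA : 0 ≤ wA)
    (hover : (N : ℝ) * m < (seatTotal N wA p : ℝ))
    (k : ℕ) (hk1 : seatTotal N wA p < k) (hk2 : k ≤ N)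
    (c : (Fin N → ℝ) → (Fin N → ℝ) → ℝ)
    (hc0 : ∀ r ∈ Pset N m, c r r = 0)
    (hcnn : ∀ r ∈ Pset N m, ∀ r' ∈ Pset N m, 0 ≤ c r r')
    (hccont : ContinuousOn (fun z : (Fin N → ℝ) × (Fin N → ℝ) => c z.1 z.2)
      (Pset N m ×ˢ Pset N m))
    (hcseg : ∀ r ∈ Pset N m, ∀ r' ∈ Pset N m, r ≠ r' →
      ∀ θ θ' : ℝ, 0 ≤ θ → θ < θ' → θ' ≤ 1 →
        c r (fun d => (1 - θ) * r d + θ * r' d) <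
        c r (fun d => (1 - θ') * r d + θ' * r' d))
    (w w' : ℝ) (hw : wA ≤ w) (hww' : w < w')
    (hfeas : {t : ℝ | ∃ r ∈ Pset N m, k ≤ seatTotal N w' r ∧ t = c p r}.Nonempty) :
    {t : ℝ | ∃ r ∈ Pset N m, k ≤ seatTotal N w r ∧ t = c p r}.Nonempty ∧
    sInf {t : ℝ | ∃ r ∈ Pset N m, k ≤ seatTotal N w r ∧ t = c p r} <
      sInf {t : ℝ | ∃ r ∈ Pset N m, k ≤ seatTotal N w' r ∧ t = c p r} := by
  have hN0 : 0 < N := by omega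
  have hk1' : 1 ≤ k := by omega
  have hw0 : 0 ≤ w := hwA.trans hw
  have hw'0 : 0 ≤ w' := hw0.trans hww'.le
  -- statewide share is strictly below k - 1
  have hstle : (seatTotal N wA p : ℝ) ≤ (k : ℝ) - 1 := by
    have : seatTotal N wA p + 1 ≤ k := hk1
    have := (Nat.cast_le (α := ℝ)).mpr this
    push_cast at this
    linarith
  have ha : ∀ r ∈ Pset N m, (∑ d, r d) ≤ (k : ℝ) - 1 := by
    intro r hr
    rw [pset_sum hN0 hr]
    linarith
  -- the feasible profile at w'
  obtain ⟨t1, r1, hr1P, hr1f, _⟩ := hfeas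
  -- compact feasible set at w'
  set F' : Set (Fin N → ℝ) := Pset N m ∩
    (⋃ (s : Finset (Fin N)) (_ : k ≤ s.card), {r : Fin N → ℝ | ∀ d ∈ s, (1 + w') / 2 ≤ r d})
    with hF'
  have hmemF' : ∀ r, r ∈ F' ↔ (r ∈ Pset N m ∧ k ≤ seatTotal N w' r) := by
    intro r
    constructor
    · rintro ⟨hrP, hrU⟩
      refine ⟨hrP, (feas_iff r w' hw'0 k hk1' hk2 (ha r hrP)).mpr ?_⟩
      simp only [Set.mem_iUnion] at hrU
      obtain ⟨s, hs, hrs⟩ := hrU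
      exact ⟨s, hs, hrs⟩
    · rintro ⟨hrP, hrf⟩
      refine ⟨hrP, ?_⟩
      obtain ⟨s, hs, hrs⟩ := (feas_iff r w' hw'0 k hk1' hk2 (ha r hrP)).mp hrf
      simp only [Set.mem_iUnion]
      exact ⟨s, hs, hrs⟩
  have hF'compact : IsCompact F' :=
    (pset_isCompact N m).inter_right (feasSet_isClosed N k ((1 + w') / 2))
  have hF'ne : F'.Nonempty := ⟨r1, (hmemF' r1).mpr ⟨hr1P, hr1f⟩⟩
  have hF'sub : F' ⊆ Pset N m := Set.inter_subset_left
  -- continuity of c p · on Pset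
  have hcp : ContinuousOn (fun r => c p r) (Pset N m) := by
    have : (fun r : Fin N → ℝ => c p r)
        = (fun z : (Fin N → ℝ) × (Fin N → ℝ) => c z.1 z.2) ∘ (fun r => (p, r)) := rfl
    rw [this]
    exact hccont.comp (Continuous.continuousOn (by fun_prop))
      (fun r hr => Set.mk_mem_prod hp hr)
  -- minimizer
  obtain ⟨rs, hrsF, hrsmin⟩ := hF'compact.exists_isMinOn hF'ne (hcp.mono hF'sub)
  obtain ⟨hrsP, hrsf⟩ := (hmemF' rs).mp hrsF
  have hrsmin' : ∀ x ∈ F', c p rs ≤ c p x := fun x hx => hrsmin hx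
  -- sInf at w' equals c p rs
  have hInf' : sInf {t : ℝ | ∃ r ∈ Pset N m, k ≤ seatTotal N w' r ∧ t = c p r} = c p rs := by
    apply le_antisymm
    · apply csInf_le
      · exact ⟨0, fun t ⟨r, hrP, _, ht⟩ => ht ▸ hcnn p hp r hrP⟩
      · exact ⟨rs, hrsP, hrsf, rfl⟩
    · refine le_csInf ⟨c p rs, rs, hrsP, hrsf, rfl⟩ ?_
      rintro t ⟨r, hrP, hrf, rfl⟩
      exact hrsmin' r ((hmemF' r).mpr ⟨hrP, hrf⟩)
  -- p is not feasible at w', so p ≠ rs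
  have hpne : p ≠ rs := by
    intro he
    have hpf : k ≤ seatTotal N w' p := he ▸ hrsf
    obtain ⟨s, hs, hps⟩ := (feas_iff p w' hw'0 k hk1' hk2 (ha p hp)).mp hpf
    have : k ≤ seatTotal N wA p := by
      apply (feas_iff p wA hwA k hk1' hk2 (ha p hp)).mpr
      exact ⟨s, hs, fun d hd => le_trans (by linarith [hps d hd]) (le_refl (p d))⟩
    omega
  -- the interpolated profile
  set θ : ℝ := (1 + w) / (1 + w') with hθ
  have hw'pos : (0 : ℝ) < 1 + w' := by linarith
  have hθ0 : 0 ≤ θ := div_nonneg (by linarith) hw'pos.le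
  have hθ1 : θ < 1 := (div_lt_one hw'pos).mpr (by linarith)
  set r0 : Fin N → ℝ := fun d => (1 - θ) * p d + θ * rs d with hr0
  have hr0P : r0 ∈ Pset N m := by
    constructor
    · intro d
      have h1 := (hp.1 d).1; have h2 := (hp.1 d).2
      have h3 := (hrsP.1 d).1; have h4 := (hrsP.1 d).2
      constructor
      · have : 0 ≤ (1 - θ) * p d := mul_nonneg (by linarith) h1
        have : 0 ≤ θ * rs d := mul_nonneg hθ0 h3
        simp only [hr0]
        nlinarith
      · simp only [hr0]
        nlinarith
    · have e1 : ∑ d, p d = (N : ℝ) * m := pset_sum hN0 hp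
      have e2 : ∑ d, rs d = (N : ℝ) * m := pset_sum hN0 hrsP
      have : ∑ d, r0 d = (N : ℝ) * m := by
        simp only [hr0]
        rw [Finset.sum_add_distrib, ← Finset.mul_sum, ← Finset.mul_sum, e1, e2]
        ring
      rw [this]
      have hN' : (N : ℝ) ≠ 0 := Nat.cast_ne_zero.mpr hN0.ne'
      field_simp
  -- r0 is feasible at w
  have hr0f : k ≤ seatTotal N w r0 := by
    apply (feas_iff r0 w hw0 k hk1' hk2 (ha r0 hr0P)).mpr
    obtain ⟨s, hs, hrss⟩ := (feas_iff rs w' hw'0 k hk1' hk2 (ha rs hrsP)).mp hrsf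
    refine ⟨s, hs, fun d hd => ?_⟩
    have h1 := (hp.1 d).1
    have h2 := hrss d hd
    have key : θ * ((1 + w') / 2) = (1 + w) / 2 := by
      rw [hθ]; field_simp
    have : θ * ((1 + w') / 2) ≤ θ * rs d := mul_le_mul_of_nonneg_left h2 hθ0
    have : (1 - θ) * p d ≥ 0 := mul_nonneg (by linarith) h1
    simp only [hr0]
    linarith [mul_le_mul_of_nonneg_left h2 hθ0]
  -- the strict cost inequality
  have hlt : c p r0 < c p rs := by
    have := hcseg p hp rs hrsP hpne θ 1 hθ0 hθ1 le_rfl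
    have he : (fun d => (1 - 1) * p d + 1 * rs d) = rs := by funext d; ring
    rw [he] at this
    exact this
  refine ⟨⟨c p r0, r0, hr0P, hr0f, rfl⟩, ?_⟩
  rw [hInf']
  calc sInf {t : ℝ | ∃ r ∈ Pset N m, k ≤ seatTotal N w r ∧ t = c p r}
      ≤ c p r0 := csInf_le ⟨0, fun t ⟨r, hrP, _, ht⟩ => ht ▸ hcnn p hp r hrP⟩
        ⟨r0, hr0P, hr0f, rfl⟩
    _ < c p rs := hlt
end

section
/- Let λ ≥ 0 be a weight and let p, q : Fin N → ℝ be profiles with 0 ≤ p_d, q_d ≤ 1 and ∑_d p_d = ∑_d q_d. For u ∈ [0,1] define r(u) := (1−u)·q + u·p. Suppose the seat total S₀ minimizes Φ_{r(0)}(·; λ) = Φ_q(·; λ) over {0,…,N} but does not minimize Φ_{r(1)}(·; λ) = Φ_p(·; λ). Then there exist u* ∈ [0,1] and a seat total S' ≠ S₀ such that both S₀ and S' minimize Φ_{r(u*)}(·; λ) over {0,…,N}. -/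
open Finset

/-! The sum of the `S` largest entries is, by an exchange argument, the maximum of
`∑ d ∈ A, r d` over `S`-element sets `A`; hence it is continuous in `r`, and so is each
`u ↦ Φ_{r(u)}(S; λ)`. The set of `u ∈ [0, 1]` at which `S₀` minimizes is then closed and
contains `0`. If at each of its points `S₀` were the unique minimizer, the strict inequalities
would persist a little to the right, and continuous induction would put `1` in the set. -/

open Filter Topology

lemma Finset.sum_le_sum_of_card_eq_of_forall_sdiff_le {ι M : Type*} [DecidableEq ι]
    [AddCommMonoid M] [LinearOrder M] [IsOrderedAddMonoid M] {s t : Finset ι} {f : ι → M}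
    (hst : #s = #t) (h : ∀ x ∈ s \ t, ∀ y ∈ t \ s, f x ≤ f y) :
    ∑ x ∈ s, f x ≤ ∑ x ∈ t, f x := by
  have hcard : #(s \ t) = #(t \ s) := card_sdiff_comm hst
  rw [← sum_inter_add_sum_sdiff s t, ← sum_inter_add_sum_sdiff t s, inter_comm]
  refine add_le_add_right ?_ _
  rcases (t \ s).eq_empty_or_nonempty with hts | hts
  · rw [hts, card_empty, card_eq_zero] at hcard
    rw [hcard, hts]
  · calc ∑ x ∈ s \ t, f x ≤ #(s \ t) • (t \ s).inf' hts f :=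
          sum_le_card_nsmul _ _ _ fun x hx => le_inf' hts _ fun y hy => h x hx y hy
      _ ≤ ∑ y ∈ t \ s, f y := hcard ▸ card_nsmul_le_sum _ _ _ fun y hy => inf'_le f hy

noncomputable def topSet {N : ℕ} (p : Fin N → ℝ) (S : ℕ) : Finset (Fin N) :=
  ({i | (i : ℕ) < S} : Finset (Fin N)).map (Fin.revPerm.trans (Tuple.sort p)).toEmbedding

lemma topSum_eq_sum_topSet {N : ℕ} (p : Fin N → ℝ) (S : ℕ) :
    topSum p S = ∑ i ∈ topSet p S, p i := by
  rw [topSet, sum_map, sum_filter]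
  rfl

lemma card_topSet {N : ℕ} (p : Fin N → ℝ) (S : ℕ) : #(topSet p S) = min N S := by
  rw [topSet, card_map, Fin.card_filter_val_lt]

lemma mem_topSet {N : ℕ} {p : Fin N → ℝ} {S : ℕ} {i : Fin N} :
    i ∈ topSet p S ↔ (((Tuple.sort p).symm i).rev : ℕ) < S := by
  rw [topSet, mem_map_equiv]
  simp

lemma antitone_ordStat {N : ℕ} (p : Fin N → ℝ) : Antitone (ordStat p) :=
  fun _ _ hij => Tuple.monotone_sort p (Fin.rev_le_rev.mpr hij)

lemma sum_le_topSum {N : ℕ} (p : Fin N → ℝ) (S : ℕ) {A : Finset (Fin N)}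
    (hA : #A = min N S) : ∑ i ∈ A, p i ≤ topSum p S := by
  rw [topSum_eq_sum_topSet]
  refine sum_le_sum_of_card_eq_of_forall_sdiff_le (hA.trans (card_topSet p S).symm) ?_
  intro x hx y hy
  rw [Finset.mem_sdiff, mem_topSet] at hx hy
  have hxy : ((Tuple.sort p).symm y).rev ≤ ((Tuple.sort p).symm x).rev := by
    rw [Fin.le_def]; omega
  simpa [ordStat] using antitone_ordStat p hxy

lemma topSum_eq_sup' {N : ℕ} (p : Fin N → ℝ) (S : ℕ) :
    topSum p S = (powersetCard (min N S) univ).sup'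
      ⟨topSet p S, mem_powersetCard_univ.mpr (card_topSet p S)⟩ (fun A => ∑ i ∈ A, p i) :=
  le_antisymm
    (topSum_eq_sum_topSet p S ▸ le_sup' (fun A => ∑ i ∈ A, p i)
      (mem_powersetCard_univ.mpr (card_topSet p S)))
    (sup'_le _ _ fun _ hA => sum_le_topSum p S (mem_powersetCard_univ.mp hA))

lemma continuous_topSum {N : ℕ} (S : ℕ) : Continuous fun p : Fin N → ℝ => topSum p S := by
  simp_rw [topSum_eq_sup']
  exact Continuous.finset_sup'_apply ⟨_, mem_powersetCard_univ.mpr (card_topSet 0 S)⟩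
    fun A _ => by fun_prop

lemma continuous_phiS {N : ℕ} (S : ℕ) (w : ℝ) :
    Continuous fun p : Fin N → ℝ => PhiS p S w := by
  have := continuous_topSum (N := N) S
  unfold PhiS
  fun_prop

theorem exists_isMinOn_pair_of_isMinOn_of_not_isMinOn {ι α : Type*} [LinearOrder α]
    [TopologicalSpace α] [OrderClosedTopology α] {s : Set ι} (hs : s.Finite)
    {F : ι → ℝ → α} {a b : ℝ} (hab : a ≤ b) (hF : ∀ i, ContinuousOn (F i) (Set.Icc a b))
    {i₀ : ι} (ha : IsMinOn (F · a) s i₀) (hb : ¬ IsMinOn (F · b) s i₀) :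
    ∃ u ∈ Set.Icc a b, ∃ j ∈ s, j ≠ i₀ ∧
      IsMinOn (F · u) s i₀ ∧ IsMinOn (F · u) s j := by
  set Z := {u | IsMinOn (F · u) s i₀}
  by_contra! hno
  have hclosed : IsClosed (Z ∩ Set.Icc a b) := by
    have : Z ∩ Set.Icc a b =
        Set.Icc a b ∩ ⋂ j ∈ s, {u ∈ Set.Icc a b | F i₀ u ≤ F j u} := by
      ext u
      simp only [Z, isMinOn_iff, Set.mem_inter_iff, Set.mem_ofPred_eq, Set.mem_iInter]
      grind
    rw [this]
    exact isClosed_Icc.inter (isClosed_biInter fun j _ => isClosed_Icc.isClosed_le (hF i₀) (hF j))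
  refine hb (hclosed.Icc_subset_of_forall_mem_nhdsWithin ha ?_ ⟨hab, le_rfl⟩)
  rintro x ⟨hxZ, hx⟩
  replace hxZ : IsMinOn (F · x) s i₀ := hxZ
  have hlt : ∀ j ∈ s \ {i₀}, F i₀ x < F j x := fun j hj => lt_of_not_ge fun hle =>
    hno x (Set.Ico_subset_Icc_self hx) j hj.1 hj.2 hxZ
      (isMinOn_iff.mpr fun k hk => hle.trans (isMinOn_iff.mp hxZ k hk))
  have hnhds : 𝓝[>] x ≤ 𝓝[Set.Icc a b] x := nhdsWithin_le_of_mem <|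
    mem_of_superset (Ioo_mem_nhdsGT hx.2)
      (Set.Ioo_subset_Icc_self.trans (Set.Icc_subset_Icc_left hx.1))
  have htends : ∀ i, Tendsto (F i) (𝓝[>] x) (𝓝 (F i x)) := fun i =>
    (hF i x (Set.Ico_subset_Icc_self hx)).mono_left hnhds
  filter_upwards [(hs.sdiff (t := {i₀})).eventually_all.2 fun j hj =>
    (htends i₀).eventually_lt (htends j) (hlt j hj)] with u hu
  refine (isMinOn_iff.mpr fun j hj => ?_ : IsMinOn (F · u) s i₀)
  rcases eq_or_ne j i₀ with rfl | hne
  · exact le_rfl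
  · exact (hu j ⟨hj, hne⟩).le

theorem stmt19_general (N : ℕ) (lam : ℝ)
    (p q : Fin N → ℝ)
    (S₀ : ℕ)
    (hminq : ∀ S' ≤ N, PhiS q S₀ lam ≤ PhiS q S' lam)
    (hnotp : ¬ ∀ S' ≤ N, PhiS p S₀ lam ≤ PhiS p S' lam) :
    ∃ u : ℝ, 0 ≤ u ∧ u ≤ 1 ∧
      ∃ S' ≤ N, S' ≠ S₀ ∧
        (∀ S'' ≤ N, PhiS (fun d => (1 - u) * q d + u * p d) S₀ lam ≤
          PhiS (fun d => (1 - u) * q d + u * p d) S'' lam) ∧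
        (∀ S'' ≤ N, PhiS (fun d => (1 - u) * q d + u * p d) S' lam ≤
          PhiS (fun d => (1 - u) * q d + u * p d) S'' lam) := by
  set r : ℝ → Fin N → ℝ := fun u d => (1 - u) * q d + u * p d
  have hr0 : r 0 = q := by simp [r]
  have hr1 : r 1 = p := by simp [r]
  obtain ⟨u, hu, S', hS', hne, hminS₀, hminS'⟩ :=
    exists_isMinOn_pair_of_isMinOn_of_not_isMinOn (F := fun S u => PhiS (r u) S lam)
      (Set.finite_Iic N) zero_le_one
      (fun S => ((continuous_phiS S lam).comp (by fun_prop : Continuous r)).continuousOn)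
      (by rw [hr0]; exact hminq) (by rw [hr1]; exact hnotp)
  exact ⟨u, hu.1, hu.2, S', hS', hne, hminS₀, hminS'⟩

/-- Lemma 6: an indifference point along the segment.
Let `λ ≥ 0` and let `p, q` be profiles with entries in `[0,1]` and equal totals. For
`u ∈ [0,1]` set `r(u) = (1−u)·q + u·p`. Suppose the seat total `S₀` minimizes
`Φ_{r(0)}(·; λ) = Φ_q(·; λ)` over `{0,…,N}` but does not minimize
`Φ_{r(1)}(·; λ) = Φ_p(·; λ)`. Then there exist `u* ∈ [0,1]` and a seat total `S' ≠ S₀`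
such that both `S₀` and `S'` minimize `Φ_{r(u*)}(·; λ)` over `{0,…,N}`. -/
theorem stmt19 (N : ℕ) (hN : 3 ≤ N) (lam : ℝ) (hlam : 0 ≤ lam)
    (p q : Fin N → ℝ)
    (hp : ∀ d, 0 ≤ p d ∧ p d ≤ 1) (hq : ∀ d, 0 ≤ q d ∧ q d ≤ 1)
    (hsum : (∑ d, p d) = ∑ d, q d)
    (S₀ : ℕ) (hS₀ : S₀ ≤ N)
    (hminq : ∀ S' ≤ N, PhiS q S₀ lam ≤ PhiS q S' lam)
    (hnotp : ¬ ∀ S' ≤ N, PhiS p S₀ lam ≤ PhiS p S' lam) :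
    ∃ u : ℝ, 0 ≤ u ∧ u ≤ 1 ∧
      ∃ S' ≤ N, S' ≠ S₀ ∧
        (∀ S'' ≤ N, PhiS (fun d => (1 - u) * q d + u * p d) S₀ lam ≤
          PhiS (fun d => (1 - u) * q d + u * p d) S'' lam) ∧
        (∀ S'' ≤ N, PhiS (fun d => (1 - u) * q d + u * p d) S' lam ≤
          PhiS (fun d => (1 - u) * q d + u * p d) S'' lam) :=
  stmt19_general N lam p q S₀ hminq hnotp
end
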